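/- arXiv:2205.15070 — 3 statements merged into one kernel-verified Lean document; each statement's English description precedes it below -/
import Mathlib

section
/- The relation ∼ on R × S defined by (r,s) ∼ (r',s') if and only if there exists t ∈ S such that 0 ∈ g(t, f(g(r,s',1^(n-2)), -g(r',s,1^(n-2)), 0^(m-2)), 1^(n-2)) is an equivalence relation. -/
universe u v

/-- Extension of a set-valued `m`-ary hyperoperation to sets of arguments. -/
def setExt {α : Type u} (f : (ℕ → α) → Set α) (A : ℕ → Set α) : Set α :=
  {r | ∃ x : ℕ → α, (∀ i, x i ∈ A i) ∧ r ∈ f x}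

/-- A commutative Krasner `(m,n)`-hyperring with scalar identity `one` and
absorbing element `zero`.  The `m`-ary hyperoperation `f` and the `n`-ary
operation `g` are encoded as functions on `ℕ`-indexed families which only
depend on the first `m` (resp. `n`) entries. -/
structure KrasnerHyperring (R : Type u) (m n : ℕ) where
  f : (ℕ → R) → Set R
  g : (ℕ → R) → R
  zero : R
  one : R
  neg : R → R
  hm : 2 ≤ m
  hn : 2 ≤ n
  f_congr : ∀ x y : ℕ → R, (∀ i, i < m → x i = y i) → f x = f y
  g_congr : ∀ x y : ℕ → R, (∀ i, i < n → x i = y i) → g x = g y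
  f_comm : ∀ (x : ℕ → R) (σ : Equiv.Perm ℕ), (∀ i, m ≤ i → σ i = i) → f (x ∘ σ) = f x
  g_comm : ∀ (x : ℕ → R) (σ : Equiv.Perm ℕ), (∀ i, n ≤ i → σ i = i) → g (x ∘ σ) = g x
  f_nonempty : ∀ x, (f x).Nonempty
  f_assoc : ∀ (z : ℕ → R) (i j : ℕ), i < m → j < m →
    setExt f (fun k => if k < i then {z k} else if k = i then f (fun l => z (i + l)) else {z (k + m - 1)}) =
    setExt f (fun k => if k < j then {z k} else if k = j then f (fun l => z (j + l)) else {z (k + m - 1)})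
  g_assoc : ∀ (z : ℕ → R) (i j : ℕ), i < n → j < n →
    g (fun k => if k < i then z k else if k = i then g (fun l => z (i + l)) else z (k + n - 1)) =
    g (fun k => if k < j then z k else if k = j then g (fun l => z (j + l)) else z (k + n - 1))
  distrib : ∀ (x a : ℕ → R),
    {r | ∃ u ∈ f x, r = g (fun j => if j = 0 then u else a j)} =
    f (fun k => g (fun j => if j = 0 then x k else a j))
  f_zero : ∀ x : R, f (fun i => if i = 0 then x else zero) = {x}
  g_one : ∀ x : R, g (fun i => if i = 0 then x else one) = x
  g_zero : ∀ (x : ℕ → R) (i : ℕ), i < n → x i = zero → g x = zero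
  neg_mem : ∀ x : R, zero ∈ f (fun i => if i = 0 then x else if i = 1 then neg x else zero)
  neg_unique : ∀ x y : R, zero ∈ f (fun i => if i = 0 then x else if i = 1 then y else zero) → y = neg x
  canonical : ∀ (a : R) (y : ℕ → R), a ∈ f y → ∀ i, i < m →
    y i ∈ f (fun j => if j = i then a else neg (y j))

namespace KrasnerHyperring

variable {R : Type u} {m n : ℕ}

/-- `g(a, b, 1^(n-2))`. -/
def g2 (H : KrasnerHyperring R m n) (a b : R) : R :=
  H.g (fun i => if i = 0 then a else if i = 1 then b else H.one)

/-- `S` is an `n`-ary multiplicative subset. -/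
def IsMultSubset (H : KrasnerHyperring R m n) (S : Set R) : Prop :=
  ∀ s : ℕ → R, (∀ i, i < n → s i ∈ S) → H.g s ∈ S

/-- The set `f(g(r,s',1^(n-2)), -g(r',s,1^(n-2)), 0^(m-2))`. -/
def fracMix (H : KrasnerHyperring R m n) (r s' r' s : R) : Set R :=
  H.f (fun i => if i = 0 then H.g2 r s' else if i = 1 then H.neg (H.g2 r' s) else H.zero)

/-- The fraction relation on `R × S`:
`(r,s) ∼ (r',s')` iff `0 ∈ g(t, f(g(r,s',1^(n-2)), -g(r',s,1^(n-2)), 0^(m-2)), 1^(n-2))`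
for some `t ∈ S`. -/
def FracRel (H : KrasnerHyperring R m n) (S : Set R) (p q : R × S) : Prop :=
  ∃ t ∈ S, ∃ u ∈ H.fracMix p.1 (q.2 : R) q.1 (p.2 : R), H.g2 t u = H.zero

/-- The hyperring of fractions `S⁻¹R` as a quotient of `R × S`. -/
def Frac (H : KrasnerHyperring R m n) (S : Set R) : Type u :=
  Quot (H.FracRel S)

/-- The fraction `r/s`. -/
def mkFrac (H : KrasnerHyperring R m n) (S : Set R) (r s : R) (hs : s ∈ S) : Frac H S :=
  Quot.mk _ (r, ⟨s, hs⟩)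

/-- The zero fraction `0/1`. -/
def zeroFrac (H : KrasnerHyperring R m n) {S : Set R} (h1 : H.one ∈ S) : Frac H S :=
  H.mkFrac S H.zero H.one h1

/-- The unit fraction `1/1`. -/
def oneFrac (H : KrasnerHyperring R m n) {S : Set R} (h1 : H.one ∈ S) : Frac H S :=
  H.mkFrac S H.one H.one h1

/-- The natural map `φ : R → S⁻¹R`, `r ↦ r/1`. -/
def natMap (H : KrasnerHyperring R m n) {S : Set R} (h1 : H.one ∈ S) (r : R) : Frac H S :=
  H.mkFrac S r H.one h1

/-- The `n`-ary multiplication on `S⁻¹R`: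
`G(r_1/s_1, ..., r_n/s_n) = g(r_1,...,r_n)/g(s_1,...,s_n)`. -/
noncomputable def fracG (H : KrasnerHyperring R m n) {S : Set R} (hS : H.IsMultSubset S)
    (x : ℕ → Frac H S) : Frac H S :=
  H.mkFrac S (H.g (fun i => ((x i).out).1)) (H.g (fun i => (((x i).out).2 : R)))
    (hS _ (fun i _ => ((x i).out).2.property))

/-- The denominator `g(s_1,...,s_m,1^(n-m))` of the `m`-ary hypersum. -/
noncomputable def denomF (H : KrasnerHyperring R m n) {S : Set R} (x : ℕ → Frac H S) : R :=
  H.g (fun j => if j < m then (((x j).out).2 : R) else H.one)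

theorem denomF_mem (H : KrasnerHyperring R m n) {S : Set R} (hS : H.IsMultSubset S)
    (h1 : H.one ∈ S) (x : ℕ → Frac H S) : H.denomF x ∈ S := by
  refine hS _ (fun j _ => ?_)
  by_cases h : j < m <;> simp only [h, if_true, if_false]
  · exact ((x j).out).2.property
  · exact h1

/-- The `m`-ary hyperaddition on `S⁻¹R`:
`F(r_1/s_1,...,r_m/s_m) = f(g(r_1,s_2,...,s_m,1^(n-m)),...,g(s_1,...,s_{m-1},r_m,1^(n-m))) / g(s_1,...,s_m,1^(n-m))`. -/
noncomputable def fracF (H : KrasnerHyperring R m n) {S : Set R} (hS : H.IsMultSubset S)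
    (h1 : H.one ∈ S) (x : ℕ → Frac H S) : Set (Frac H S) :=
  {q | ∃ u ∈ H.f (fun k => H.g (fun j =>
      if j = k then ((x k).out).1 else if j < m then (((x j).out).2 : R) else H.one)),
    q = H.mkFrac S u (H.denomF x) (H.denomF_mem hS h1 x)}

/-- The negative of a fraction. -/
noncomputable def fracNeg (H : KrasnerHyperring R m n) {S : Set R} (q : Frac H S) : Frac H S :=
  H.mkFrac S (H.neg q.out.1) (q.out.2 : R) q.out.2.property

/-- Hyperideals of a Krasner `(m,n)`-hyperring. -/
def IsHyperideal (H : KrasnerHyperring R m n) (I : Set R) : Prop :=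
  H.zero ∈ I ∧ (∀ x : ℕ → R, (∀ i, i < m → x i ∈ I) → H.f x ⊆ I) ∧
    (∀ a ∈ I, H.neg a ∈ I) ∧
    (∀ (x : ℕ → R) (i : ℕ), i < n → x i ∈ I → H.g x ∈ I)

/-- The localization `S⁻¹I = {a/s : a ∈ I, s ∈ S}` of a hyperideal. -/
def locIdeal (H : KrasnerHyperring R m n) (S I : Set R) : Set (Frac H S) :=
  {q | ∃ a ∈ I, ∃ s, ∃ hs : s ∈ S, q = H.mkFrac S a s hs}

/-- `n`-ary prime hyperideals. -/
def IsPrimeHyperideal (H : KrasnerHyperring R m n) (P : Set R) : Prop :=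
  H.IsHyperideal P ∧ P ≠ Set.univ ∧ ∀ x : ℕ → R, H.g x ∈ P → ∃ i, i < n ∧ x i ∈ P

/-- The radical of a hyperideal: the intersection of all `n`-ary prime
hyperideals containing it (`R` if there are none). -/
def radical (H : KrasnerHyperring R m n) (I : Set R) : Set R :=
  ⋂₀ {P | H.IsPrimeHyperideal P ∧ I ⊆ P}

/-- `n`-ary primary hyperideals. -/
def IsPrimaryHyperideal (H : KrasnerHyperring R m n) (Q : Set R) : Prop :=
  H.IsHyperideal Q ∧ Q ≠ Set.univ ∧
    ∀ x : ℕ → R, H.g x ∈ Q → ∀ i, i < n → x i ∉ Q →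
      H.g (Function.update x i H.one) ∈ H.radical Q

/-- `n`-ary hyperintegral domains. -/
def IsHyperDomain (H : KrasnerHyperring R m n) : Prop :=
  ∀ x : ℕ → R, H.g x = H.zero → ∃ i, i < n ∧ x i = H.zero

/-- Hyperideals of the hyperring of fractions `S⁻¹R`. -/
def IsFracHyperideal (H : KrasnerHyperring R m n) {S : Set R} (hS : H.IsMultSubset S)
    (h1 : H.one ∈ S) (J : Set (Frac H S)) : Prop :=
  H.zeroFrac h1 ∈ J ∧ (∀ x : ℕ → Frac H S, (∀ i, i < m → x i ∈ J) → H.fracF hS h1 x ⊆ J) ∧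
    (∀ q ∈ J, H.fracNeg q ∈ J) ∧
    (∀ (x : ℕ → Frac H S) (i : ℕ), i < n → x i ∈ J → H.fracG hS x ∈ J)

/-- `n`-ary prime hyperideals of `S⁻¹R`. -/
def IsFracPrime (H : KrasnerHyperring R m n) {S : Set R} (hS : H.IsMultSubset S)
    (h1 : H.one ∈ S) (P : Set (Frac H S)) : Prop :=
  H.IsFracHyperideal hS h1 P ∧ P ≠ Set.univ ∧
    ∀ x : ℕ → Frac H S, H.fracG hS x ∈ P → ∃ i, i < n ∧ x i ∈ P

/-- Maximal hyperideals of `S⁻¹R`. -/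
def IsFracMaximal (H : KrasnerHyperring R m n) {S : Set R} (hS : H.IsMultSubset S)
    (h1 : H.one ∈ S) (M : Set (Frac H S)) : Prop :=
  H.IsFracHyperideal hS h1 M ∧ M ≠ Set.univ ∧
    ∀ J : Set (Frac H S), H.IsFracHyperideal hS h1 J → M ⊆ J → J = M ∨ J = Set.univ

/-- The radical of a hyperideal of `S⁻¹R`. -/
def fracRadical (H : KrasnerHyperring R m n) {S : Set R} (hS : H.IsMultSubset S)
    (h1 : H.one ∈ S) (J : Set (Frac H S)) : Set (Frac H S) :=
  ⋂₀ {P | H.IsFracPrime hS h1 P ∧ J ⊆ P}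

/-- `n`-ary primary hyperideals of `S⁻¹R`. -/
def IsFracPrimary (H : KrasnerHyperring R m n) {S : Set R} (hS : H.IsMultSubset S)
    (h1 : H.one ∈ S) (Q : Set (Frac H S)) : Prop :=
  H.IsFracHyperideal hS h1 Q ∧ Q ≠ Set.univ ∧
    ∀ x : ℕ → Frac H S, H.fracG hS x ∈ Q → ∀ i, i < n → x i ∉ Q →
      H.fracG hS (Function.update x i (H.oneFrac h1)) ∈ H.fracRadical hS h1 Q

/-- Homomorphisms of Krasner `(m,n)`-hyperrings. -/
def IsHom {R2 : Type v} (H : KrasnerHyperring R m n) (H2 : KrasnerHyperring R2 m n)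
    (k : R → R2) : Prop :=
  (∀ x : ℕ → R, k '' (H.f x) = H2.f (k ∘ x)) ∧ (∀ x : ℕ → R, k (H.g x) = H2.g (k ∘ x))

/-- Homomorphisms from `S⁻¹R` to a Krasner `(m,n)`-hyperring. -/
def IsFracHom {R2 : Type v} (H : KrasnerHyperring R m n) {S : Set R} (hS : H.IsMultSubset S)
    (h1 : H.one ∈ S) (H2 : KrasnerHyperring R2 m n) (h : Frac H S → R2) : Prop :=
  (∀ x : ℕ → Frac H S, h '' (H.fracF hS h1 x) = H2.f (h ∘ x)) ∧
    (∀ x : ℕ → Frac H S, h (H.fracG hS x) = H2.g (h ∘ x))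

/-- The coset `f(r, I, 0^(m-2))` in the quotient `R/I`. -/
def quotCoset (H : KrasnerHyperring R m n) (I : Set R) (r : R) : Set R :=
  setExt H.f (fun i => if i = 0 then {r} else if i = 1 then I else {H.zero})

end KrasnerHyperring

namespace KrasnerHyperring

variable {R : Type u} {m n : ℕ} (H : KrasnerHyperring R m n)

lemma g2_comm (a b : R) : H.g2 a b = H.g2 b a := by
  have hn := H.hn
  have hc := H.g_comm (fun i => if i = 0 then b else if i = 1 then a else H.one)
    (Equiv.swap 0 1) (fun i hi => Equiv.swap_apply_of_ne_of_ne (by omega) (by omega))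
  have hx : ((fun i => if i = 0 then b else if i = 1 then a else H.one) ∘ Equiv.swap 0 1) =
      (fun i => if i = 0 then a else if i = 1 then b else H.one) := by
    funext i
    rcases eq_or_ne i 0 with h0 | h0
    · subst h0; simp [Equiv.swap_apply_def]
    rcases eq_or_ne i 1 with h1 | h1
    · subst h1; simp [Equiv.swap_apply_def]
    · simp [Function.comp, Equiv.swap_apply_of_ne_of_ne h0 h1, h0, h1]
  calc H.g2 a b = H.g ((fun i => if i = 0 then b else if i = 1 then a else H.one) ∘
        Equiv.swap 0 1) := by rw [hx]; rfl
    _ = H.g2 b a := hc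

lemma g2_one_right (a : R) : H.g2 a H.one = a := by
  have hx : (fun i => if i = 0 then a else if i = 1 then H.one else H.one) =
      (fun i => if i = 0 then a else H.one) := by
    funext i; by_cases h : i = 0 <;> simp [h]
  show H.g _ = a
  rw [hx]; exact H.g_one a

lemma g2_zero_left (a : R) : H.g2 H.zero a = H.zero := by
  have hn := H.hn
  exact H.g_zero _ 0 (by omega) (by simp)

lemma neg_neg' (a : R) : H.neg (H.neg a) = a := by
  have hm := H.hm
  have hc := H.f_comm (fun i => if i = 0 then a else if i = 1 then H.neg a else H.zero)
    (Equiv.swap 0 1) (fun i hi => Equiv.swap_apply_of_ne_of_ne (by omega) (by omega))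
  have hx : ((fun i => if i = 0 then a else if i = 1 then H.neg a else H.zero) ∘ Equiv.swap 0 1) =
      (fun i => if i = 0 then H.neg a else if i = 1 then a else H.zero) := by
    funext i
    rcases eq_or_ne i 0 with h0 | h0
    · subst h0; simp [Equiv.swap_apply_def]
    rcases eq_or_ne i 1 with h1 | h1
    · subst h1; simp [Equiv.swap_apply_def]
    · simp [Function.comp, Equiv.swap_apply_of_ne_of_ne h0 h1, h0, h1]
  have hz : H.zero ∈ H.f (fun i => if i = 0 then H.neg a else if i = 1 then a else H.zero) := by
    rw [← hx, hc]; exact H.neg_mem a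
  exact (H.neg_unique _ _ hz).symm

lemma g2_assoc (a b c : R) : H.g2 (H.g2 a b) c = H.g2 a (H.g2 b c) := by
  have hn := H.hn
  set z : ℕ → R := fun k => if k = 0 then a else if k = 1 then b else
    if k = n then c else H.one with hzdef
  have key := H.g_assoc z 0 1 (by omega) (by omega)
  have inner0 : H.g (fun l => z l) = H.g2 a b := by
    apply H.g_congr
    intro l hl
    simp only [hzdef]
    rcases eq_or_ne l 0 with h0 | h0
    · simp [h0]
    rcases eq_or_ne l 1 with h1 | h1
    · simp [h1]
    · have : l ≠ n := by omega
      simp [h0, h1, this]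
  have inner1 : H.g (fun l => z (1 + l)) = H.g2 b c := by
    have hperm := H.g_comm (fun i => if i = 0 then b else if i = 1 then c else H.one)
      (Equiv.swap 1 (n - 1)) (fun i hi => Equiv.swap_apply_of_ne_of_ne (by omega) (by omega))
    have step : H.g (fun l => z (1 + l)) =
        H.g ((fun i => if i = 0 then b else if i = 1 then c else H.one) ∘ Equiv.swap 1 (n - 1)) := by
      apply H.g_congr
      intro l hl
      simp only [hzdef, Function.comp]
      rcases eq_or_ne l 0 with h0 | h0
      · subst h0
        rw [Equiv.swap_apply_of_ne_of_ne (by omega) (by omega)]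
        simp
      rcases eq_or_ne l (n - 1) with hl1 | hl1
      · subst hl1
        rw [Equiv.swap_apply_right]
        have e1 : 1 + (n - 1) = n := by omega
        simp [e1, show n ≠ 0 by omega, show n ≠ 1 by omega]
      rcases eq_or_ne l 1 with h1 | h1
      · subst h1
        rw [Equiv.swap_apply_left]
        have h2 : (2 : ℕ) ≠ 0 := by omega
        have h3 : (2 : ℕ) ≠ 1 := by omega
        have h4 : (1 + 1 : ℕ) ≠ n := by omega
        have h5 : n - 1 ≠ 0 := by omega
        have h6 : n - 1 ≠ 1 := by omega
        simp [h4, h5, h6]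
      · rw [Equiv.swap_apply_of_ne_of_ne h1 hl1]
        have e1 : 1 + l ≠ 0 := by omega
        have e2 : 1 + l ≠ 1 := by omega
        have e3 : 1 + l ≠ n := by omega
        simp [e1, e2, e3, h0, h1]
    rw [step, hperm]; rfl
  have L : H.g (fun k => if k < 0 then z k else if k = 0 then H.g (fun l => z (0 + l))
      else z (k + n - 1)) = H.g2 (H.g2 a b) c := by
    apply H.g_congr
    intro k hk
    rcases eq_or_ne k 0 with h0 | h0
    · simp [h0, inner0]
    rcases eq_or_ne k 1 with h1 | h1
    · subst h1
      have e1 : 1 + n - 1 = n := by omega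
      simp [hzdef, e1, show n ≠ 0 by omega, show n ≠ 1 by omega, h0]
    · have e1 : k + n - 1 ≠ 0 := by omega
      have e2 : k + n - 1 ≠ 1 := by omega
      have e3 : k + n - 1 ≠ n := by omega
      simp [hzdef, h0, h1, e1, e2, e3]
  have Rr : H.g (fun k => if k < 1 then z k else if k = 1 then H.g (fun l => z (1 + l))
      else z (k + n - 1)) = H.g2 a (H.g2 b c) := by
    apply H.g_congr
    intro k hk
    rcases eq_or_ne k 0 with h0 | h0
    · simp [h0, hzdef]
    rcases eq_or_ne k 1 with h1 | h1
    · simp [h1, inner1, show ¬ (1 : ℕ) < 1 by omega]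
    · have e1 : k + n - 1 ≠ 0 := by omega
      have e2 : k + n - 1 ≠ 1 := by omega
      have e3 : k + n - 1 ≠ n := by omega
      simp [hzdef, h0, h1, e1, e2, e3, show ¬ k < 1 by omega]
  exact L.symm.trans (key.trans Rr)

/-- `R` with `g2` as multiplication is a commutative monoid. -/
def mon : CommMonoid R where
  mul := H.g2
  one := H.one
  mul_assoc := H.g2_assoc
  one_mul a := (H.g2_comm H.one a).trans (H.g2_one_right a)
  mul_one := H.g2_one_right
  mul_comm := H.g2_comm

lemma distrib2 (A C t : R) :
    {r | ∃ v ∈ H.f (fun i => if i = 0 then A else if i = 1 then C else H.zero), r = H.g2 v t}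
      = H.f (fun i => if i = 0 then H.g2 A t else if i = 1 then H.g2 C t else H.zero) := by
  have hd := H.distrib (fun i => if i = 0 then A else if i = 1 then C else H.zero)
    (fun j => if j = 1 then t else H.one)
  have h2 : H.f (fun k => H.g (fun j => if j = 0 then
        (fun i => if i = 0 then A else if i = 1 then C else H.zero) k
        else (fun j => if j = 1 then t else H.one) j))
      = H.f (fun i => if i = 0 then H.g2 A t else if i = 1 then H.g2 C t else H.zero) := by
    apply H.f_congr
    intro i hi
    rcases eq_or_ne i 0 with h0 | h0
    · subst h0; simp only [if_pos rfl]; rfl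
    rcases eq_or_ne i 1 with h1 | h1
    · subst h1; simp only [if_neg h0, if_pos rfl]; rfl
    · simp only [if_neg h0, if_neg h1]
      exact H.g_zero _ 0 (by have := H.hn; omega) (by simp)
  exact hd.trans h2

lemma neg_g2 (b t : R) : H.g2 (H.neg b) t = H.neg (H.g2 b t) := by
  have hmem : H.g2 H.zero t ∈ {r | ∃ v ∈ H.f (fun i => if i = 0 then b else
      if i = 1 then H.neg b else H.zero), r = H.g2 v t} := ⟨H.zero, H.neg_mem b, rfl⟩
  rw [H.distrib2] at hmem
  rw [H.g2_zero_left] at hmem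
  exact H.neg_unique _ _ hmem

lemma fracRel_iff (S : Set R) (p q : R × S) :
    H.FracRel S p q ↔ ∃ t ∈ S, H.g2 (H.g2 p.1 (q.2 : R)) t = H.g2 (H.g2 q.1 (p.2 : R)) t := by
  constructor
  · rintro ⟨t, ht, u, hu, h0⟩
    refine ⟨t, ht, ?_⟩
    have hu' : H.g2 u t ∈ {r | ∃ v ∈ H.f (fun i => if i = 0 then H.g2 p.1 (q.2 : R) else
        if i = 1 then H.neg (H.g2 q.1 (p.2 : R)) else H.zero), r = H.g2 v t} := ⟨u, hu, rfl⟩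
    rw [H.distrib2] at hu'
    rw [H.neg_g2] at hu'
    rw [H.g2_comm u t, h0] at hu'
    have heq := H.neg_unique _ _ hu'
    have := congrArg H.neg heq
    rw [H.neg_neg', H.neg_neg'] at this
    exact this.symm
  · rintro ⟨t, ht, heq⟩
    have hz : H.zero ∈ H.f (fun i => if i = 0 then H.g2 (H.g2 p.1 (q.2 : R)) t else
        if i = 1 then H.g2 (H.neg (H.g2 q.1 (p.2 : R))) t else H.zero) := by
      rw [H.neg_g2, ← heq]
      exact H.neg_mem _
    rw [← H.distrib2] at hz
    obtain ⟨v, hv, hv0⟩ := hz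
    exact ⟨t, ht, v, hv, by rw [H.g2_comm]; exact hv0.symm⟩

lemma g2_mem_of_mem {S : Set R} (hS : H.IsMultSubset S) (h1 : H.one ∈ S)
    {a b : R} (ha : a ∈ S) (hb : b ∈ S) : H.g2 a b ∈ S := by
  refine hS _ (fun i hi => ?_)
  rcases eq_or_ne i 0 with h0 | h0
  · simpa [h0] using ha
  rcases eq_or_ne i 1 with hh1 | hh1
  · simpa [hh1, h0] using hb
  · simpa [h0, hh1] using h1

end KrasnerHyperring

/-- The five-element computation in a commutative monoid used for transitivity. -/
lemma fracRel_key5 {M : Type u} [CommMonoid M] (r s r' s' r'' s'' t1 t2 : M)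
    (h1 : r * s' * t1 = r' * s * t1) (h2 : r' * s'' * t2 = r'' * s' * t2) :
    r * s'' * (t1 * (t2 * s')) = r'' * s * (t1 * (t2 * s')) := by
  calc r * s'' * (t1 * (t2 * s')) = (r * s' * t1) * (s'' * t2) := by
        simp only [mul_comm, mul_left_comm, mul_assoc]
    _ = (r' * s * t1) * (s'' * t2) := by rw [h1]
    _ = (r' * s'' * t2) * (s * t1) := by
        simp only [mul_comm, mul_left_comm, mul_assoc]
    _ = (r'' * s' * t2) * (s * t1) := by rw [h2]
    _ = r'' * s * (t1 * (t2 * s')) := by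
        simp only [mul_comm, mul_left_comm, mul_assoc]

/-- the fraction relation on `R × S` is an equivalence relation. -/
theorem fracRel_equivalence {R : Type u} {m n : ℕ} (H : KrasnerHyperring R m n) (S : Set R)
    (hS : H.IsMultSubset S) (h1 : H.one ∈ S) :
    Equivalence (H.FracRel S) := by
  constructor
  · intro p
    exact (H.fracRel_iff S p p).mpr ⟨H.one, h1, rfl⟩
  · intro p q hpq
    obtain ⟨t, ht, he⟩ := (H.fracRel_iff S p q).mp hpq
    exact (H.fracRel_iff S q p).mpr ⟨t, ht, he.symm⟩
  · intro p q w hpq hqw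
    obtain ⟨t1, ht1, he1⟩ := (H.fracRel_iff S p q).mp hpq
    obtain ⟨t2, ht2, he2⟩ := (H.fracRel_iff S q w).mp hqw
    refine (H.fracRel_iff S p w).mpr
      ⟨H.g2 t1 (H.g2 t2 (q.2 : R)), H.g2_mem_of_mem hS h1 ht1
        (H.g2_mem_of_mem hS h1 ht2 q.2.property), ?_⟩
    letI : CommMonoid R := H.mon
    exact fracRel_key5 p.1 (p.2 : R) q.1 (q.2 : R) w.1 (w.2 : R) t1 t2 he1 he2
end

section
/- For r ∈ R and s, s' ∈ S, the fractions g(r, s^(m-1), 1^(n-m))/g(s', s^(m-1), 1^(n-m)) and g(r,1^(n-1))/g(s',1^(n-1)) are equal in S⁻¹R. -/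
universe u v

section Aux

variable {R : Type u} {m n : ℕ}

/-- Auxiliary: compose a `(2n-1)`-sequence at position `i`. -/
def gcomp (H : KrasnerHyperring R m n) (z : ℕ → R) (i : ℕ) : R :=
  H.g (fun k => if k < i then z k else if k = i then H.g (fun l => z (i + l)) else z (k + n - 1))

theorem gcomp_eq (H : KrasnerHyperring R m n) (z : ℕ → R) {i j : ℕ} (hi : i < n) (hj : j < n) :
    gcomp H z i = gcomp H z j := H.g_assoc z i j hi hj

/-- The cycle `(0 1 ... n-1)` as a permutation of `ℕ`. -/
def cycPerm (n : ℕ) : Equiv.Perm ℕ where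
  toFun j := if j < n - 1 then j + 1 else if j = n - 1 then 0 else j
  invFun j := if j = 0 then n - 1 else if j < n then j - 1 else j
  left_inv j := by dsimp only; split_ifs <;> first | omega | simp_all
  right_inv j := by dsimp only; split_ifs <;> first | omega | simp_all

theorem cycPerm_apply (n j : ℕ) :
    cycPerm n j = if j < n - 1 then j + 1 else if j = n - 1 then 0 else j := rfl

theorem frac_cancel_key (H : KrasnerHyperring R m n) (r s s' : R) :
    H.g2 (H.g (fun j => if j = 0 then r else if j < m then s else H.one))
      (H.g (fun j => if j = 0 then s' else H.one)) =
    H.g2 (H.g (fun j => if j = 0 then r else H.one))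
      (H.g (fun j => if j = 0 then s' else if j < m then s else H.one)) := by
  have hn := H.hn
  set o := H.one with ho
  set A := H.g (fun j => if j = 0 then r else if j < m then s else o) with hA
  set B := H.g (fun j => if j = 0 then s' else o) with hB
  set C := H.g (fun j => if j = 0 then r else o) with hC
  set D := H.g (fun j => if j = 0 then s' else if j < m then s else o) with hD
  set z1 : ℕ → R := fun j => if j = n then B else if j = 0 then r else
    if j < m ∧ j < n then s else o with hz1
  set z2 : ℕ → R := fun j => if j = n then D else if j = 0 then r else o with hz2
  set z3 : ℕ → R := fun j => if j = n - 1 then s' else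
    if j < m - 1 ∧ j < n - 1 then s else o with hz3
  -- the inner block of `gcomp z1 0` is `A`
  have inner10 : H.g (fun l => z1 (0 + l)) = A := by
    rw [hA]
    refine H.g_congr _ _ fun i hi => ?_
    simp only [hz1]
    split_ifs <;> first | rfl | omega | simp_all
  -- `g2 A B = gcomp z1 0`
  have e10 : H.g2 A B = gcomp H z1 0 := by
    unfold KrasnerHyperring.g2 gcomp
    refine H.g_congr _ _ fun i hi => ?_
    by_cases h0 : i = 0
    · subst h0
      rw [if_pos rfl, if_neg (by omega : ¬ (0:ℕ) < 0), if_pos rfl]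
      exact inner10.symm
    · by_cases h1 : i = 1
      · subst h1
        rw [if_neg h0, if_pos rfl, if_neg (by omega : ¬ (1:ℕ) < 0), if_neg h0,
          show 1 + n - 1 = n by omega]
        simp [hz1]
      · rw [if_neg h0, if_neg h1, if_neg (by omega : ¬ i < 0), if_neg h0]
        simp only [hz1]
        rw [if_neg (by omega : ¬ i + n - 1 = n), if_neg (by omega : ¬ i + n - 1 = 0),
          if_neg (by omega : ¬ (i + n - 1 < m ∧ i + n - 1 < n))]
  -- the inner block of `gcomp z3 (n-1)` is `B`
  have innerB : H.g (fun l => z3 (n - 1 + l)) = B := by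
    rw [hB]
    refine H.g_congr _ _ fun i hi => ?_
    simp only [hz3]
    split_ifs <;> first | rfl | omega | simp_all
  -- the inner block of `gcomp z3 0` is `D` (via the cycle permutation)
  have innerD3 : H.g (fun l => z3 (0 + l)) = D := by
    have hfix : ∀ i, n ≤ i → cycPerm n i = i := by
      intro i hi
      rw [cycPerm_apply]
      split_ifs <;> omega
    have hperm := H.g_comm (fun j => if j = 0 then s' else if j < m then s else o)
      (cycPerm n) hfix
    rw [hD, ← hperm]
    refine H.g_congr _ _ fun i hi => ?_
    simp only [hz3, Function.comp_apply, cycPerm_apply]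
    split_ifs <;> first | rfl | omega | simp_all
  -- `gcomp z3 0 = D`
  have e30 : gcomp H z3 0 = D := by
    unfold gcomp
    have step : H.g (fun k => if k < 0 then z3 k else if k = 0 then
        H.g (fun l => z3 (0 + l)) else z3 (k + n - 1)) =
        H.g (fun k => if k = 0 then D else o) := by
      refine H.g_congr _ _ fun i hi => ?_
      by_cases h0 : i = 0
      · subst h0
        rw [if_neg (by omega : ¬ (0:ℕ) < 0), if_pos rfl, if_pos rfl]
        exact innerD3
      · rw [if_neg (by omega : ¬ i < 0), if_neg h0, if_neg h0]
        simp only [hz3]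
        rw [if_neg (by omega : ¬ i + n - 1 = n - 1),
          if_neg (by omega : ¬ (i + n - 1 < m - 1 ∧ i + n - 1 < n - 1))]
    rw [step, ho]
    exact H.g_one D
  -- the inner block of `gcomp z1 1` equals `gcomp z3 (n-1)`, hence `D`
  have inner11 : H.g (fun l => z1 (1 + l)) = D := by
    have e3 : H.g (fun l => z1 (1 + l)) = gcomp H z3 (n - 1) := by
      unfold gcomp
      refine H.g_congr _ _ fun i hi => ?_
      by_cases hnl : i = n - 1
      · subst hnl
        rw [if_neg (by omega : ¬ n - 1 < n - 1), if_pos rfl,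
          show 1 + (n - 1) = n by omega, show z1 n = B by simp [hz1]]
        exact innerB.symm
      · rw [if_pos (by omega : i < n - 1)]
        simp only [hz1, hz3]
        rw [if_neg (by omega : ¬ 1 + i = n), if_neg (by omega : ¬ 1 + i = 0),
          if_neg hnl]
        split_ifs <;> first | rfl | omega | simp_all
    rw [e3, gcomp_eq H z3 (by omega) (by omega : 0 < n), e30]
  -- target middle form `T = g(r, D, 1^(n-2))`
  set T := H.g (fun k => if k = 0 then r else if k = 1 then D else o) with hT
  have e11 : gcomp H z1 1 = T := by
    unfold gcomp
    rw [hT]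
    refine H.g_congr _ _ fun i hi => ?_
    by_cases h0 : i = 0
    · subst h0
      rw [if_pos (by omega : (0:ℕ) < 1), if_pos rfl]
      simp only [hz1]
      split_ifs <;> first | rfl | omega | simp_all
    · by_cases h1 : i = 1
      · subst h1
        rw [if_neg (by omega : ¬ (1:ℕ) < 1), if_pos rfl, if_neg h0, if_pos rfl]
        exact inner11
      · rw [if_neg (by omega : ¬ i < 1), if_neg h1, if_neg h0, if_neg h1]
        simp only [hz1]
        rw [if_neg (by omega : ¬ i + n - 1 = n), if_neg (by omega : ¬ i + n - 1 = 0),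
          if_neg (by omega : ¬ (i + n - 1 < m ∧ i + n - 1 < n))]
  -- the inner block of `gcomp z2 1` is `D` (via the swap permutation)
  have innerD2 : H.g (fun l => z2 (1 + l)) = D := by
    have hfix : ∀ i, n ≤ i → Equiv.swap 0 (n-1) i = i := by
      intro i hi
      exact Equiv.swap_apply_of_ne_of_ne (by omega) (by omega)
    have hperm := H.g_comm (fun j => if j = 0 then D else H.one) (Equiv.swap 0 (n-1)) hfix
    rw [H.g_one D] at hperm
    rw [← hperm]
    refine H.g_congr _ _ fun i hi => ?_
    simp only [Function.comp_apply]
    by_cases hnl : i = n - 1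
    · subst hnl
      rw [Equiv.swap_apply_right, if_pos rfl, show 1 + (n - 1) = n by omega,
        show z2 n = D by simp [hz2]]
    · have hsw : Equiv.swap 0 (n-1) i ≠ 0 := by
        by_cases h0 : i = 0
        · subst h0
          rw [Equiv.swap_apply_left]
          omega
        · rw [Equiv.swap_apply_of_ne_of_ne h0 hnl]
          intro hc
          exact absurd (hc ▸ Equiv.swap_apply_left 0 (n-1)) (by omega)
      rw [if_neg hsw]
      simp only [hz2]
      rw [if_neg (by omega : ¬ 1 + i = n), if_neg (by omega : ¬ 1 + i = 0), ho]
  have e21 : gcomp H z2 1 = T := by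
    unfold gcomp
    rw [hT]
    refine H.g_congr _ _ fun i hi => ?_
    by_cases h0 : i = 0
    · subst h0
      rw [if_pos (by omega : (0:ℕ) < 1), if_pos rfl]
      simp only [hz2]
      split_ifs <;> first | rfl | omega | simp_all
    · by_cases h1 : i = 1
      · subst h1
        rw [if_neg (by omega : ¬ (1:ℕ) < 1), if_pos rfl, if_neg h0, if_pos rfl]
        exact innerD2
      · rw [if_neg (by omega : ¬ i < 1), if_neg h1, if_neg h0, if_neg h1]
        simp only [hz2]
        rw [if_neg (by omega : ¬ i + n - 1 = n), if_neg (by omega : ¬ i + n - 1 = 0)]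
  -- the inner block of `gcomp z2 0` is `C`
  have innerC : H.g (fun l => z2 (0 + l)) = C := by
    rw [hC]
    refine H.g_congr _ _ fun i hi => ?_
    simp only [hz2]
    split_ifs <;> first | rfl | omega | simp_all
  have e20 : H.g2 C D = gcomp H z2 0 := by
    unfold KrasnerHyperring.g2 gcomp
    refine H.g_congr _ _ fun i hi => ?_
    by_cases h0 : i = 0
    · subst h0
      rw [if_pos rfl, if_neg (by omega : ¬ (0:ℕ) < 0), if_pos rfl]
      exact innerC.symm
    · by_cases h1 : i = 1
      · subst h1
        rw [if_neg h0, if_pos rfl, if_neg (by omega : ¬ (1:ℕ) < 0), if_neg h0,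
          show 1 + n - 1 = n by omega]
        simp [hz2]
      · rw [if_neg h0, if_neg h1, if_neg (by omega : ¬ i < 0), if_neg h0]
        simp only [hz2]
        rw [if_neg (by omega : ¬ i + n - 1 = n), if_neg (by omega : ¬ i + n - 1 = 0)]
  calc H.g2 A B = gcomp H z1 0 := e10
    _ = gcomp H z1 1 := gcomp_eq H z1 (by omega) (by omega)
    _ = T := e11
    _ = gcomp H z2 1 := e21.symm
    _ = gcomp H z2 0 := gcomp_eq H z2 (by omega) (by omega)
    _ = H.g2 C D := e20.symm

end Aux
/-- `g(r, s^(m-1), 1^(n-m))/g(s', s^(m-1), 1^(n-m)) = g(r,1^(n-1))/g(s',1^(n-1))`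
in `S⁻¹R`. -/
theorem frac_cancel {R : Type u} {m n : ℕ} (H : KrasnerHyperring R m n) (S : Set R)
    (hS : H.IsMultSubset S) (h1 : H.one ∈ S) (r s s' : R) (hs : s ∈ S) (hs' : s' ∈ S)
    (hd1 : H.g (fun j => if j = 0 then s' else if j < m then s else H.one) ∈ S)
    (hd2 : H.g (fun j => if j = 0 then s' else H.one) ∈ S) :
    H.mkFrac S (H.g (fun j => if j = 0 then r else if j < m then s else H.one))
        (H.g (fun j => if j = 0 then s' else if j < m then s else H.one)) hd1 =
      H.mkFrac S (H.g (fun j => if j = 0 then r else H.one))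
        (H.g (fun j => if j = 0 then s' else H.one)) hd2 := by
  have key := frac_cancel_key H r s s'
  have hn := H.hn
  refine Quot.sound ?_
  refine ⟨H.one, h1, H.zero, ?_, ?_⟩
  · show H.zero ∈ H.fracMix _ _ _ _
    unfold KrasnerHyperring.fracMix
    dsimp only
    rw [← key]
    exact H.neg_mem _
  · show H.g2 H.one H.zero = H.zero
    unfold KrasnerHyperring.g2
    exact H.g_zero _ 1 (by omega) (by norm_num)
end

section
/- If R is an n-ary hyperintegral domain, then S⁻¹R is an n-ary hyperintegral domain. -/
universe u v

namespace KrasnerHyperring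

variable {R : Type u} {m n : ℕ}

lemma g2_zero_left_s10 (H : KrasnerHyperring R m n) (b : R) : H.g2 H.zero b = H.zero :=
  H.g_zero _ 0 (lt_of_lt_of_le (by norm_num) H.hn) (by simp)

lemma g2_zero_right (H : KrasnerHyperring R m n) (a : R) : H.g2 a H.zero = H.zero :=
  H.g_zero _ 1 (lt_of_lt_of_le (by norm_num) H.hn) (by simp)

lemma g2_domain (H : KrasnerHyperring R m n) (hdom : H.IsHyperDomain)
    (h10 : H.one ≠ H.zero) {a b : R} (h : H.g2 a b = H.zero) : a = H.zero ∨ b = H.zero := by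
  obtain ⟨i, hi, hz⟩ := hdom _ h
  by_cases hi0 : i = 0
  · subst hi0; simp only [if_pos rfl] at hz; exact Or.inl hz
  by_cases hi1 : i = 1
  · subst hi1; simp only [if_neg one_ne_zero, if_pos rfl] at hz; exact Or.inr hz
  · simp only [if_neg hi0, if_neg hi1] at hz; exact absurd hz h10

lemma f_zero_zero (H : KrasnerHyperring R m n) :
    H.f (fun i => if i = 0 then H.zero else if i = 1 then H.zero else H.zero) = {H.zero} := by
  have heq : (fun i => if i = 0 then H.zero else if i = 1 then H.zero else H.zero)
      = (fun i : ℕ => if i = 0 then H.zero else H.zero) := by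
    funext i; split_ifs <;> rfl
  rw [heq]; exact H.f_zero H.zero

lemma neg_zero' (H : KrasnerHyperring R m n) : H.neg H.zero = H.zero :=
  (H.neg_unique H.zero H.zero (by rw [H.f_zero_zero]; exact rfl)).symm

lemma neg_neg'_s10 (H : KrasnerHyperring R m n) (x : R) : H.neg (H.neg x) = x := by
  refine (H.neg_unique (H.neg x) x ?_).symm
  have h := H.neg_mem x
  have hc := H.f_comm (fun i => if i = 0 then x else if i = 1 then H.neg x else H.zero)
    (Equiv.swap 0 1)
    (fun i hi => Equiv.swap_apply_of_ne_of_ne (by have := H.hm; omega) (by have := H.hm; omega))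
  have hfun : ((fun i => if i = 0 then x else if i = 1 then H.neg x else H.zero) ∘
      (Equiv.swap 0 1)) = (fun i => if i = 0 then H.neg x else if i = 1 then x else H.zero) := by
    funext i
    by_cases hi0 : i = 0
    · subst hi0; simp
    by_cases hi1 : i = 1
    · subst hi1; simp
    · simp [Equiv.swap_apply_of_ne_of_ne hi0 hi1, hi0, hi1]
  rw [hfun] at hc
  rw [hc]; exact h

lemma fracRel_zero_iff (H : KrasnerHyperring R m n) {S : Set R} (h1 : H.one ∈ S)
    (h0 : H.zero ∉ S) (hdom : H.IsHyperDomain) {p q : R × S} (h : H.FracRel S p q) :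
    (p.1 = H.zero ↔ q.1 = H.zero) := by
  have h10 : H.one ≠ H.zero := fun he => h0 (he ▸ h1)
  obtain ⟨t, ht, u, hu, hg⟩ := h
  have ht0 : t ≠ H.zero := fun he => h0 (he ▸ ht)
  have hu0 : u = H.zero := by
    rcases H.g2_domain hdom h10 hg with h' | h'
    · exact absurd h' ht0
    · exact h'
  subst hu0
  simp only [fracMix] at hu
  have hkey : H.g2 q.1 (p.2 : R) = H.g2 p.1 (q.2 : R) := by
    have hnu := H.neg_unique _ _ hu
    rw [← H.neg_neg'_s10 (H.g2 q.1 (p.2 : R)), hnu, H.neg_neg'_s10]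
  have hp2 : (p.2 : R) ≠ H.zero := fun he => h0 (he ▸ p.2.property)
  have hq2 : (q.2 : R) ≠ H.zero := fun he => h0 (he ▸ q.2.property)
  constructor
  · intro hp
    rw [hp, H.g2_zero_left_s10] at hkey
    rcases H.g2_domain hdom h10 hkey with h' | h'
    · exact h'
    · exact absurd h' hp2
  · intro hq
    rw [hq, H.g2_zero_left_s10] at hkey
    rcases H.g2_domain hdom h10 hkey.symm with h' | h'
    · exact h'
    · exact absurd h' hq2

lemma mkFrac_zero (H : KrasnerHyperring R m n) {S : Set R} (h1 : H.one ∈ S)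
    (s : R) (hs : s ∈ S) : H.mkFrac S H.zero s hs = H.zeroFrac h1 := by
  apply Quot.sound
  refine ⟨H.one, h1, H.zero, ?_, H.g2_zero_right H.one⟩
  simp only [fracMix, g2_zero_left_s10, neg_zero']
  rw [H.f_zero_zero]; exact rfl

end KrasnerHyperring
/-- if `R` is an `n`-ary hyperintegral domain then so is `S⁻¹R`. -/
theorem frac_hyperDomain {R : Type u} {m n : ℕ} (H : KrasnerHyperring R m n) (S : Set R)
    (hS : H.IsMultSubset S) (h1 : H.one ∈ S) (h0 : H.zero ∉ S)
    (hdom : H.IsHyperDomain) :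
    ∀ x : ℕ → KrasnerHyperring.Frac H S,
      H.fracG hS x = H.zeroFrac h1 → ∃ i, i < n ∧ x i = H.zeroFrac h1 := by
  intro x hx
  classical
  let isZ : KrasnerHyperring.Frac H S → Prop := Quot.lift (fun p => p.1 = H.zero)
    (fun p q h => propext (H.fracRel_zero_iff h1 h0 hdom h))
  have h2 : (H.g (fun i => ((x i).out).1) = H.zero) = (H.zero = H.zero) := congrArg isZ hx
  have hz : H.g (fun i => ((x i).out).1) = H.zero := cast h2.symm rfl
  obtain ⟨i, hi, hri⟩ := hdom _ hz
  refine ⟨i, hi, ?_⟩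
  have hout : x i = Quot.mk _ ((x i).out) := (Quot.out_eq _).symm
  rw [hout]
  have hp : ((x i).out) = (H.zero, (x i).out.2) := Prod.ext hri rfl
  rw [hp]
  exact H.mkFrac_zero h1 _ ((x i).out.2.property)
end
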